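/- arXiv:1404.0034 — 3 statements merged into one kernel-verified Lean document; each statement's English description precedes it below -/
import Mathlib

section
/- Let T be a norm on ℝ³ differentiable away from 0, let Σ ⊆ ℝ² be open, let X : Σ → ℝ³ be a smooth immersion, and let ξ : Σ → ℝ³ be smooth with T(ξ(p)) = 1 and (fderiv T (ξ(p))) ∘ (fderiv X p) = 0 for all p ∈ Σ. Then for every smooth function ρ : Σ → ℝ, the map Y : Σ → ℝ³ × ℝ, Y(p) = (X(p) + ρ(p)·ξ(p), ρ(p)), is an anisotropic sphere congruence enveloped by X: for all p ∈ Σ, (i) L(Y(p) − (X(p),0)) = 0, and (ii) the composition of the derivative of L at the point Y(p) − (X(p),0) with the derivative of p ↦ (X(p),0) vanishes. -/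
/-!
`Y − (X, 0) = ρ • (ξ, 1)` lies on the light cone of `L` because `T (ρ • ξ) = |ρ|`. For the
envelope condition only the spatial part of `dL` matters, i.e. the derivative of `T²`. Since `T²`
is homogeneous of degree two, its derivative at `ρ • ξ` is `ρ` times its derivative `2 dT_ξ` at
`ξ`, which kills the image of `dX` by the Cahn–Hoffman condition. At the vertex `ρ = 0` we use
`T² = O(‖x‖²)`, which holds because a seminorm on a finite-dimensional space is continuous.
-/

/-- The conical Finsler metric `L(x,t) = T(x)² − t²`. -/
noncomputable def coneMetric (T : EuclideanSpace ℝ (Fin 3) → ℝ) :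
    EuclideanSpace ℝ (Fin 3) × ℝ → ℝ :=
  fun q => (T q.1) ^ 2 - q.2 ^ 2

open Asymptotics Filter Topology

section

variable {E : Type*} [NormedAddCommGroup E] [NormedSpace ℝ E]

theorem Seminorm.continuous_of_finiteDimensional [FiniteDimensional ℝ E] (q : Seminorm ℝ E) :
    Continuous q :=
  continuousOn_univ.mp (q.convexOn.continuousOn isOpen_univ)

theorem Seminorm.hasFDerivAt_sq_zero [FiniteDimensional ℝ E] (q : Seminorm ℝ E) :
    HasFDerivAt (fun x => q x ^ 2) (0 : E →L[ℝ] ℝ) 0 := by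
  obtain ⟨C, -, hC⟩ := q.bound_of_continuous_normedSpace q.continuous_of_finiteDimensional
  have hq : (⇑q) =O[𝓝 0] fun x => ‖x - 0‖ :=
    IsBigO.of_bound C <| Eventually.of_forall fun x => by
      simpa [abs_of_nonneg (apply_nonneg q x)] using hC x
  exact (hq.pow 2).hasFDerivAt one_lt_two

theorem HasFDerivAt.smul_of_sq_homogeneous {N : E → ℝ} {N' : E →L[ℝ] ℝ} {x : E}
    (hx : HasFDerivAt N N' x) (hN : ∀ (c : ℝ) y, N (c • y) = c ^ 2 * N y)
    (h0 : HasFDerivAt N (0 : E →L[ℝ] ℝ) 0) (c : ℝ) : HasFDerivAt N (c • N') (c • x) := by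
  rcases eq_or_ne c 0 with rfl | hc
  · simpa using h0
  have hrescale : N = fun y => c ^ 2 * N (c⁻¹ • y) := by
    funext y; rw [← hN, smul_inv_smul₀ hc]
  have hcomp : HasFDerivAt (fun y => N (c⁻¹ • y)) (N'.comp (c⁻¹ • ContinuousLinearMap.id ℝ E))
      (c • x) := by
    refine HasFDerivAt.comp (c • x) ?_ ((hasFDerivAt_id _).const_smul c⁻¹)
    rwa [inv_smul_smul₀ hc]
  have hscale : c • N' = c ^ 2 • N'.comp (c⁻¹ • ContinuousLinearMap.id ℝ E) := by
    ext v
    simp [sq, mul_assoc, hc]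
  rw [hrescale, hscale]
  exact hcomp.const_mul (c ^ 2)

end

theorem hasFDerivAt_coneMetric {T : EuclideanSpace ℝ (Fin 3) → ℝ}
    {N' : EuclideanSpace ℝ (Fin 3) →L[ℝ] ℝ} {y : EuclideanSpace ℝ (Fin 3)} (t : ℝ)
    (h : HasFDerivAt (fun x => T x ^ 2) N' y) :
    HasFDerivAt (coneMetric T)
      (N'.comp (.fst ℝ _ ℝ) - (2 * t) • .snd ℝ (EuclideanSpace ℝ (Fin 3)) ℝ) (y, t) := by
  have hsnd := (hasDerivAt_pow 2 t).comp_hasFDerivAt (y, t)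
    (hasFDerivAt_snd (𝕜 := ℝ) (E := EuclideanSpace ℝ (Fin 3)))
  refine ((h.comp (y, t) hasFDerivAt_fst).sub hsnd).congr_fderiv ?_
  ext <;> simp

theorem sphere_congruence_enveloped_general
    (T : EuclideanSpace ℝ (Fin 3) → ℝ)
    (hT2 : ∀ (c : ℝ) (x : EuclideanSpace ℝ (Fin 3)), T (c • x) = |c| * T x)
    (hT3 : ∀ x y, T (x + y) ≤ T x + T y)
    (hTdiff : ∀ x : EuclideanSpace ℝ (Fin 3), x ≠ 0 → DifferentiableAt ℝ T x)
    (Ω : Set (EuclideanSpace ℝ (Fin 2))) (hOm : IsOpen Ω)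
    (X : EuclideanSpace ℝ (Fin 2) → EuclideanSpace ℝ (Fin 3))
    (hX : ContDiffOn ℝ (⊤ : ℕ∞) X Ω)
    (ξ : EuclideanSpace ℝ (Fin 2) → EuclideanSpace ℝ (Fin 3))
    (hξ1 : ∀ p ∈ Ω, T (ξ p) = 1)
    (horth : ∀ p ∈ Ω, (fderiv ℝ T (ξ p)).comp (fderiv ℝ X p) = 0)
    (ρ : EuclideanSpace ℝ (Fin 2) → ℝ) :
    ∀ p ∈ Ω,
      coneMetric T ((X p + ρ p • ξ p, ρ p) - (X p, (0 : ℝ))) = 0 ∧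
      (fderiv ℝ (coneMetric T) ((X p + ρ p • ξ p, ρ p) - (X p, (0 : ℝ)))).comp
        (fderiv ℝ (fun q => ((X q, (0 : ℝ)) :
          EuclideanSpace ℝ (Fin 3) × ℝ)) p) = 0 := by
  intro p hp
  let N : Seminorm ℝ (EuclideanSpace ℝ (Fin 3)) := .of T hT3 (by simpa using hT2)
  have hξ0 : ξ p ≠ 0 := by
    rintro h
    simpa [h, show T 0 = 0 from map_zero N] using hξ1 p hp
  have hY : (X p + ρ p • ξ p, ρ p) - (X p, (0 : ℝ)) = (ρ p • ξ p, ρ p) := by simp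
  rw [hY]
  refine ⟨by simp [coneMetric, hT2, hξ1 p hp], ?_⟩
  have hsq : ∀ (c : ℝ) x, T (c • x) ^ 2 = c ^ 2 * T x ^ 2 := fun c x => by
    rw [hT2, mul_pow, sq_abs]
  have hN := ((hTdiff _ hξ0).hasFDerivAt.pow 2).smul_of_sq_homogeneous hsq
    N.hasFDerivAt_sq_zero (ρ p)
  have hXp : HasFDerivAt X (fderiv ℝ X p) p :=
    ((hX.contDiffAt (hOm.mem_nhds hp)).differentiableAt (by simp)).hasFDerivAt
  rw [(hasFDerivAt_coneMetric _ hN).fderiv, (hXp.prodMk (hasFDerivAt_const 0 p)).fderiv]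
  ext v
  have hv : fderiv ℝ T (ξ p) (fderiv ℝ X p v) = 0 := by
    simpa using DFunLike.congr_fun (horth p hp) v
  simp [hv]

/-- Lemma 3.1, first part: for any smooth `ρ`, the map
`Y = (X + ρ·ξ, ρ)` is an anisotropic sphere congruence enveloped by `X`:
`L(Y − (X,0)) ≡ 0` and `dL_{Y−(X,0)} ∘ d(X,0) ≡ 0`. -/
theorem sphere_congruence_enveloped
    (T : EuclideanSpace ℝ (Fin 3) → ℝ)
    (hT0 : ∀ x, 0 ≤ T x)
    (hT1 : ∀ x, T x = 0 ↔ x = 0)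
    (hT2 : ∀ (c : ℝ) (x : EuclideanSpace ℝ (Fin 3)), T (c • x) = |c| * T x)
    (hT3 : ∀ x y, T (x + y) ≤ T x + T y)
    (hTdiff : ∀ x : EuclideanSpace ℝ (Fin 3), x ≠ 0 → DifferentiableAt ℝ T x)
    (Ω : Set (EuclideanSpace ℝ (Fin 2))) (hOm : IsOpen Ω)
    (X : EuclideanSpace ℝ (Fin 2) → EuclideanSpace ℝ (Fin 3))
    (hX : ContDiffOn ℝ (⊤ : ℕ∞) X Ω)
    (hXimm : ∀ p ∈ Ω, Function.Injective (fderiv ℝ X p))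
    (ξ : EuclideanSpace ℝ (Fin 2) → EuclideanSpace ℝ (Fin 3))
    (hξsmooth : ContDiffOn ℝ (⊤ : ℕ∞) ξ Ω)
    (hξ1 : ∀ p ∈ Ω, T (ξ p) = 1)
    (horth : ∀ p ∈ Ω, (fderiv ℝ T (ξ p)).comp (fderiv ℝ X p) = 0)
    (ρ : EuclideanSpace ℝ (Fin 2) → ℝ)
    (hρ : ContDiffOn ℝ (⊤ : ℕ∞) ρ Ω) :
    ∀ p ∈ Ω,
      coneMetric T ((X p + ρ p • ξ p, ρ p) - (X p, (0 : ℝ))) = 0 ∧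
      (fderiv ℝ (coneMetric T) ((X p + ρ p • ξ p, ρ p) - (X p, (0 : ℝ)))).comp
        (fderiv ℝ (fun q => ((X q, (0 : ℝ)) :
          EuclideanSpace ℝ (Fin 3) × ℝ)) p) = 0 :=
  sphere_congruence_enveloped_general T hT2 hT3 hTdiff Ω hOm X hX ξ hξ1 horth ρ
end

section
/- (Envelope condition for canal surfaces.) Let T be a norm on ℝ³ differentiable away from 0, let α = (⃗α, α₄) : I → ℝ³ × ℝ be a smooth curve on an open interval I with α₄(s) ≠ 0 for all s, and let ξ : I → ℝ³ be smooth with T(ξ(s)) = 1 for all s. Define X := ⃗α − α₄·ξ : I → ℝ³. Then for each s ∈ I, the envelope condition dL_{α(s) − (X(s),0)}(X′(s), 0) = 0 holds if and only if (fderiv T (ξ(s)))(⃗α′(s)) = α₄′(s). -/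
/-!
At `α − (X,0) = (α₄ξ, α₄)` only the `T²` part of `L` sees the horizontal direction `(X′,0)`.
Since `T²` is homogeneous of degree 2 for all scalars, its differential at `α₄ξ` is
`α₄ · d(T²)_ξ = 2α₄ T(ξ) dT_ξ = 2α₄ dT_ξ`. Applied to `X′ = ⃗α′ − α₄ξ′ − α₄′ξ` this gives
`2α₄ (dT_ξ(⃗α′) − α₄′)`: indeed `dT_ξ(ξ′) = 0` because `ξ` stays on the unit sphere of `T`, and
`dT_ξ(ξ) = T(ξ) = 1` by Euler's relation. As `α₄ ≠ 0`, the claim follows.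
-/

open Set Filter Topology

section Homogeneous

variable {E F : Type*} [NormedAddCommGroup E] [NormedSpace ℝ E]
  [NormedAddCommGroup F] [NormedSpace ℝ F]

theorem HasFDerivAt.smul_of_homogeneous {Q : E → F} {Q' : E →L[ℝ] F} {x : E} {k : ℤ}
    (hQ : ∀ c : ℝ, c ≠ 0 → ∀ y, Q (c • y) = c ^ k • Q y) (h : HasFDerivAt Q Q' x)
    {c : ℝ} (hc : c ≠ 0) : HasFDerivAt Q (c ^ (k - 1) • Q') (c • x) := by
  have hQc : Q = fun y => c ^ k • Q (c⁻¹ • y) := by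
    funext y
    rw [← hQ c hc, smul_inv_smul₀ hc]
  have hscale : HasFDerivAt (fun y : E => c⁻¹ • y) (c⁻¹ • ContinuousLinearMap.id ℝ E) (c • x) :=
    (c⁻¹ • ContinuousLinearMap.id ℝ E).hasFDerivAt
  rw [← inv_smul_smul₀ hc x] at h
  convert ((h.comp (c • x) hscale).const_smul (c ^ k)) using 1
  · exact hQc
  · ext v
    simp [zpow_sub_one₀ hc, mul_smul, smul_comm (c ^ k)]

theorem HasFDerivAt.apply_self_of_homogeneous {Q : E → F} {Q' : E →L[ℝ] F} {x : E} {k : ℕ}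
    (hQ : ∀ c : ℝ, 0 < c → Q (c • x) = c ^ k • Q x) (h : HasFDerivAt Q Q' x) :
    Q' x = k • Q x := by
  have hray : HasDerivAt (fun c : ℝ => c • x) x 1 := by
    simpa using (hasDerivAt_id (1 : ℝ)).smul_const x
  have hpow : HasDerivAt (fun c : ℝ => c ^ k • Q x) ((k : ℝ) • Q x) 1 := by
    simpa using (hasDerivAt_pow k (1 : ℝ)).smul_const (Q x)
  rw [← one_smul ℝ x] at h
  have := (h.comp_hasDerivAt 1 hray).unique (hpow.congr_of_eventuallyEq
    ((eventually_gt_nhds one_pos).mono hQ))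
  simpa [Nat.cast_smul_eq_nsmul] using this

theorem HasFDerivAt.apply_deriv_eq_zero_of_eventuallyEq_const {f : E → F} {f' : E →L[ℝ] F}
    {γ : ℝ → E} {γ' : E} {s : ℝ} {y : F} (hf : HasFDerivAt f f' (γ s)) (hγ : HasDerivAt γ γ' s)
    (hconst : f ∘ γ =ᶠ[𝓝 s] fun _ => y) : f' γ' = 0 :=
  (hf.comp_hasDerivAt s hγ).unique ((hasDerivAt_const s y).congr_of_eventuallyEq hconst)

end Homogeneous

theorem fderiv_coneMetric_apply_horizontal {T : EuclideanSpace ℝ (Fin 3) → ℝ}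
    {Q' : EuclideanSpace ℝ (Fin 3) →L[ℝ] ℝ} {p v : EuclideanSpace ℝ (Fin 3)} (t : ℝ)
    (hT : HasFDerivAt (fun x => T x ^ 2) Q' p) :
    fderiv ℝ (coneMetric T) (p, t) (v, 0) = Q' v := by
  have hcone : HasFDerivAt (coneMetric T)
      (Q'.comp (ContinuousLinearMap.fst ℝ _ ℝ) - (2 * t) • ContinuousLinearMap.snd ℝ _ ℝ) (p, t) :=
    (hT.comp (p, t) hasFDerivAt_fst).sub
      (by simpa using (hasFDerivAt_snd (𝕜 := ℝ) (p := (p, t))).pow 2)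
  simp [hcone.fderiv]

theorem canal_surface_envelope_condition_general
    (T : EuclideanSpace ℝ (Fin 3) → ℝ)
    (hT2 : ∀ (c : ℝ) (x : EuclideanSpace ℝ (Fin 3)), T (c • x) = |c| * T x)
    (hTdiff : ∀ x : EuclideanSpace ℝ (Fin 3), x ≠ 0 → DifferentiableAt ℝ T x)
    (a b : ℝ)
    (αv : ℝ → EuclideanSpace ℝ (Fin 3)) (α₄ : ℝ → ℝ)
    (ξ : ℝ → EuclideanSpace ℝ (Fin 3))
    (hαv : ContDiffOn ℝ (⊤ : ℕ∞) αv (Ioo a b))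
    (hα₄ : ContDiffOn ℝ (⊤ : ℕ∞) α₄ (Ioo a b))
    (hξ : ContDiffOn ℝ (⊤ : ℕ∞) ξ (Ioo a b))
    (hα₄ne : ∀ s ∈ Ioo a b, α₄ s ≠ 0)
    (hξ1 : ∀ s ∈ Ioo a b, T (ξ s) = 1) :
    ∀ s ∈ Ioo a b,
      (fderiv ℝ (coneMetric T)
          ((αv s - (αv s - α₄ s • ξ s), α₄ s))
          (deriv (fun r => αv r - α₄ r • ξ r) s, (0 : ℝ)) = 0
        ↔ fderiv ℝ T (ξ s) (deriv αv s) = deriv α₄ s) := by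
  intro s hs
  have hI : Ioo a b ∈ 𝓝 s := isOpen_Ioo.mem_nhds hs
  have hαv' := ((hαv.contDiffAt hI).differentiableAt (by simp)).hasDerivAt
  have hα₄' := ((hα₄.contDiffAt hI).differentiableAt (by simp)).hasDerivAt
  have hξ' := ((hξ.contDiffAt hI).differentiableAt (by simp)).hasDerivAt
  have hξne : ξ s ≠ 0 := by
    intro h0
    have hT0 : T 0 = 0 := by simpa using hT2 0 0
    simpa [h0, hT0] using hξ1 s hs
  have hℓ : HasFDerivAt T (fderiv ℝ T (ξ s)) (ξ s) := (hTdiff _ hξne).hasFDerivAt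
  have hsq := (hℓ.pow 2).smul_of_homogeneous (k := 2)
    (fun c _ y => by simp [hT2, mul_pow]) (hα₄ne s hs)
  have heuler : fderiv ℝ T (ξ s) (ξ s) = 1 := by
    simpa [hξ1 s hs] using hℓ.apply_self_of_homogeneous (k := 1)
      (fun c hc => by simp [hT2, abs_of_pos hc])
  have hlevel : fderiv ℝ T (ξ s) (deriv ξ s) = 0 :=
    hℓ.apply_deriv_eq_zero_of_eventuallyEq_const hξ' (y := 1)
      (eventually_of_mem hI hξ1)
  have hX : HasDerivAt (fun r => αv r - α₄ r • ξ r) _ s := hαv'.sub (hα₄'.smul hξ')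
  rw [sub_sub_cancel, fderiv_coneMetric_apply_horizontal _ hsq, hX.deriv]
  simp [hξ1 s hs, heuler, hlevel, hα₄ne s hs, sub_eq_zero]

/-- envelope condition for canal surfaces: for a curve
`α = (⃗α, α₄)` of anisotropic spheres with `α₄ ≠ 0` and `T∘ξ ≡ 1`, setting
`X = ⃗α − α₄·ξ`, the envelope condition `dL_{α−(X,0)}(X′,0) = 0` holds iff
`⟨ξ*, ⃗α′⟩ = α₄′`. -/
theorem canal_surface_envelope_condition
    (T : EuclideanSpace ℝ (Fin 3) → ℝ)
    (hT0 : ∀ x, 0 ≤ T x)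
    (hT1 : ∀ x, T x = 0 ↔ x = 0)
    (hT2 : ∀ (c : ℝ) (x : EuclideanSpace ℝ (Fin 3)), T (c • x) = |c| * T x)
    (hT3 : ∀ x y, T (x + y) ≤ T x + T y)
    (hTdiff : ∀ x : EuclideanSpace ℝ (Fin 3), x ≠ 0 → DifferentiableAt ℝ T x)
    (a b : ℝ)
    (αv : ℝ → EuclideanSpace ℝ (Fin 3)) (α₄ : ℝ → ℝ)
    (ξ : ℝ → EuclideanSpace ℝ (Fin 3))
    (hαv : ContDiffOn ℝ (⊤ : ℕ∞) αv (Ioo a b))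
    (hα₄ : ContDiffOn ℝ (⊤ : ℕ∞) α₄ (Ioo a b))
    (hξ : ContDiffOn ℝ (⊤ : ℕ∞) ξ (Ioo a b))
    (hα₄ne : ∀ s ∈ Ioo a b, α₄ s ≠ 0)
    (hξ1 : ∀ s ∈ Ioo a b, T (ξ s) = 1) :
    ∀ s ∈ Ioo a b,
      (fderiv ℝ (coneMetric T)
          ((αv s - (αv s - α₄ s • ξ s), α₄ s))
          (deriv (fun r => αv r - α₄ r • ξ r) s, (0 : ℝ)) = 0
        ↔ fderiv ℝ T (ξ s) (deriv αv s) = deriv α₄ s) :=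
  canal_surface_envelope_condition_general T hT2 hTdiff a b αv α₄ ξ hαv hα₄ hξ hα₄ne hξ1
end

section
/- (Gauge invariance of the Laguerre density under parallel translation.) Let F : ℝ² → ℝ³ be an injective linear map, e₁, e₂ a basis of ℝ², λ₁, λ₂ nonzero reals, and G : ℝ² → ℝ³ the linear map with G(eᵢ) = −λᵢ·F(eᵢ). Let t ∈ ℝ satisfy 1 − tλ₁ ≠ 0 and 1 − tλ₂ ≠ 0, and set F̃ := F + t·G. Then F̃ is injective, G(eᵢ) = −λ̃ᵢ·F̃(eᵢ) where λ̃ᵢ := λᵢ/(1 − tλᵢ), and consequently 1/λ̃ᵢ = 1/λᵢ − t for i = 1,2, so that 1/λ̃₁ − 1/λ̃₂ = 1/λ₁ − 1/λ₂. -/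
/-! Along the basis, `F̃ = F + tG` is `F` rescaled by the nonzero factors `1 - tλᵢ`: so `F̃` is
injective and `G(eᵢ) = -λᵢ F(eᵢ) = -λᵢ/(1 - tλᵢ) F̃(eᵢ)`. The curvature radius `(1 - tλ)/λ` of the
parallel surface is `1/λ - t`, and the common shift `t` cancels in `1/λ₁ - 1/λ₂`. -/

open Function

section

variable {ι R M N : Type*} [CommRing R] [AddCommGroup M] [Module R M] [AddCommGroup N] [Module R N]

theorem LinearMap.injective_of_apply_basis_eq_units_smul (e : Module.Basis ι R M) (c : ι → Rˣ)
    {F H : M →ₗ[R] N} (hF : Injective F) (hH : ∀ i, H (e i) = c i • F (e i)) : Injective H := by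
  have hind : LinearIndependent R (H ∘ e) := by
    rw [show H ∘ e = c • F ∘ e from funext hH]
    exact (e.linearIndependent.map' F (LinearMap.ker_eq_bot.2 hF)).units_smul c
  rw [← e.constr_self R H]
  exact e.injective_constr_of_linearIndependent hind

theorem LinearMap.add_smul_apply_of_apply_eq_neg_smul {F G : M →ₗ[R] N} {v : M} {a : R} (t : R)
    (h : G v = -a • F v) : (F + t • G) v = (1 - t * a) • F v := by
  rw [LinearMap.add_apply, LinearMap.smul_apply, h, smul_smul, sub_smul, one_smul, mul_neg,
    neg_smul, sub_eq_add_neg]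

end

theorem one_div_div_one_sub_mul {K : Type*} [Field K] {a : K} (ha : a ≠ 0) (t : K) :
    1 / (a / (1 - t * a)) = 1 / a - t := by
  rw [one_div_div]
  field_simp

/-- gauge invariance of the Laguerre density: passing to the
parallel surface derivative `F̃ = F + tG` keeps `F̃` injective, replaces the
principal curvatures `λᵢ` by `λ̃ᵢ = λᵢ/(1 − tλᵢ)`, translates the curvature
radii `1/λᵢ` by `−t`, and leaves `1/λ₁ − 1/λ₂` unchanged. -/
theorem laguerre_density_gauge_invariant
    (F G : (Fin 2 → ℝ) →ₗ[ℝ] (Fin 3 → ℝ))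
    (hF : Function.Injective F)
    (e : Module.Basis (Fin 2) ℝ (Fin 2 → ℝ))
    (lam : Fin 2 → ℝ) (hlam : ∀ i, lam i ≠ 0)
    (hG : ∀ i, G (e i) = -(lam i) • F (e i))
    (t : ℝ) (ht : ∀ i, 1 - t * lam i ≠ 0) :
    Function.Injective (F + t • G) ∧
    (∀ i, G (e i) = -(lam i / (1 - t * lam i)) • (F + t • G) (e i)) ∧
    (∀ i, 1 / (lam i / (1 - t * lam i)) = 1 / lam i - t) ∧
    1 / (lam 0 / (1 - t * lam 0)) - 1 / (lam 1 / (1 - t * lam 1)) =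
      1 / lam 0 - 1 / lam 1 := by
  have hF' (i : Fin 2) : (F + t • G) (e i) = (1 - t * lam i) • F (e i) :=
    LinearMap.add_smul_apply_of_apply_eq_neg_smul t (hG i)
  have hradius (i : Fin 2) := one_div_div_one_sub_mul (hlam i) t
  refine ⟨?_, fun i => ?_, hradius, ?_⟩
  · exact LinearMap.injective_of_apply_basis_eq_units_smul e (fun i => Units.mk0 _ (ht i)) hF hF'
  · rw [hF', hG, smul_smul, neg_mul, div_mul_cancel₀ _ (ht i)]
  · rw [hradius, hradius, sub_sub_sub_cancel_right]
end
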